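/- Compatibility of the generators with the bigradation. For all multi-indices γ, γ′, β and every 𝐧′ ∈ ℕ²: if the z^β-coefficient of (z^{γ′}·D^(𝐧′))(z^γ) is nonzero, then [β] = [γ] + [γ′] + 1 and Σ_{𝐦≠0} |𝐦|·β(𝐦) = Σ_{𝐦≠0} |𝐦|·γ(𝐦) + Σ_{𝐦≠0} |𝐦|·γ′(𝐦) − |𝐧′|. -/

import Mathlib

open MvPolynomial

abbrev N2 : Type := {p : ℕ × ℕ // p ≠ (0, 0)}
abbrev Idx : Type := ℕ ⊕ N2
abbrev MIdx : Type := Idx →₀ ℕ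
abbrev PS : Type := MvPowerSeries Idx ℝ

noncomputable section

/-- the weight `|𝐧| = w₁ n₁ + w₂ n₂` of `𝐧 ∈ ℕ²`. -/
def wt (w₁ w₂ : ℝ) (n : ℕ × ℕ) : ℝ := w₁ * n.1 + w₂ * n.2

/-- `[γ] = Σ_k k γ(k) − Σ_{𝐧≠0} γ(𝐧)`. -/
def brk (γ : MIdx) : ℤ :=
  γ.sum fun i n =>
    match i with
    | Sum.inl k => (k : ℤ) * n
    | Sum.inr _ => -(n : ℤ)

/-- `Σ_{𝐦≠0} |𝐦| γ(𝐦)`. -/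
def wsum (w₁ w₂ : ℝ) (γ : MIdx) : ℝ :=
  γ.sum fun i n =>
    match i with
    | Sum.inl _ => 0
    | Sum.inr m => wt w₁ w₂ m.1 * n

/-- the homogeneity `|γ| = α([γ]+1) + Σ_{𝐧≠0}|𝐧|γ(𝐧)`. -/
def homdeg (α w₁ w₂ : ℝ) (γ : MIdx) : ℝ := α * ((brk γ : ℝ) + 1) + wsum w₁ w₂ γ

/-! ### operators on monomials (polynomial level) -/

/-- `D^(0) z^γ = Σ_k (k+1) γ(k) z^{γ - e_k + e_{k+1}}`. -/
def D0mono (γ : MIdx) : MvPolynomial Idx ℝ :=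
  γ.sum fun i n =>
    match i with
    | Sum.inl k =>
        (((k + 1) * n : ℕ) : ℝ) •
          monomial (γ - Finsupp.single (Sum.inl k) 1 + Finsupp.single (Sum.inl (k + 1)) 1) 1
    | Sum.inr _ => 0

/-- `D^(𝐧) z^γ = ∂_{z_𝐧} z^γ` for `𝐧 ≠ 0`. -/
def DNmono (m : N2) (γ : MIdx) : MvPolynomial Idx ℝ :=
  ((γ (Sum.inr m) : ℕ) : ℝ) • monomial (γ - Finsupp.single (Sum.inr m) 1) 1

/-- `D^(𝐧) z^γ` for arbitrary `𝐧 ∈ ℕ²`. -/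
def Dmono (n : ℕ × ℕ) (γ : MIdx) : MvPolynomial Idx ℝ :=
  if h : n = (0, 0) then D0mono γ else DNmono ⟨n, h⟩ γ

lemma add10_ne (n : ℕ × ℕ) : n + (1, 0) ≠ (0, 0) := by
  intro h
  exact Nat.succ_ne_zero n.1 (congrArg Prod.fst h)

lemma add01_ne (n : ℕ × ℕ) : n + (0, 1) ≠ (0, 0) := by
  intro h
  exact Nat.succ_ne_zero n.2 (congrArg Prod.snd h)

def v10 : N2 := ⟨(1, 0), by decide⟩
def v01 : N2 := ⟨(0, 1), by decide⟩

/-- `∂₁ z^γ = z_{(1,0)} D^(0) z^γ + Σ_{𝐧≠0} (n₁+1) z_{𝐧+(1,0)} ∂_{z_𝐧} z^γ`. -/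
def d1mono (γ : MIdx) : MvPolynomial Idx ℝ :=
  X (Sum.inr v10) * D0mono γ +
    γ.sum fun i n =>
      match i with
      | Sum.inl _ => 0
      | Sum.inr m =>
          (((m.1.1 + 1) * n : ℕ) : ℝ) •
            monomial
              (γ - Finsupp.single (Sum.inr m) 1 +
                Finsupp.single (Sum.inr ⟨m.1 + (1, 0), add10_ne m.1⟩) 1) 1

/-- `∂₂ z^γ`. -/
def d2mono (γ : MIdx) : MvPolynomial Idx ℝ :=
  X (Sum.inr v01) * D0mono γ +
    γ.sum fun i n =>
      match i with
      | Sum.inl _ => 0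
      | Sum.inr m =>
          (((m.1.2 + 1) * n : ℕ) : ℝ) •
            monomial
              (γ - Finsupp.single (Sum.inr m) 1 +
                Finsupp.single (Sum.inr ⟨m.1 + (0, 1), add01_ne m.1⟩) 1) 1

/-! ### operators on power series (coefficientwise) -/

/-- coefficient of `D^(0) f` at `β`. -/
def D0coeff (f : PS) (β : MIdx) : ℝ :=
  ∑ i ∈ β.support,
    match i with
    | Sum.inl (k + 1) =>
        (((k + 1) * (β (Sum.inl k) + 1) : ℕ) : ℝ) *
          MvPowerSeries.coeff
            (β + Finsupp.single (Sum.inl k) 1 - Finsupp.single (Sum.inl (k + 1)) 1) f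
    | _ => 0

/-- `D^(0)` on power series. -/
def D0series (f : PS) : PS := D0coeff f

/-- `D^(𝐧) = ∂_{z_𝐧}` on power series, `𝐧 ≠ 0`. -/
def DNseries (m : N2) (f : PS) : PS :=
  fun β => ((β (Sum.inr m) + 1 : ℕ) : ℝ) *
    MvPowerSeries.coeff (β + Finsupp.single (Sum.inr m) 1) f

/-- `D^(𝐧)` on power series for arbitrary `𝐧 ∈ ℕ²`. -/
def Dseries (n : ℕ × ℕ) (f : PS) : PS :=
  if h : n = (0, 0) then D0series f else DNseries ⟨n, h⟩ f

/-- coefficient of `∂₁ f` at `β`. -/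
def d1coeff (f : PS) (β : MIdx) : ℝ :=
  (if 1 ≤ β (Sum.inr v10) then D0coeff f (β - Finsupp.single (Sum.inr v10) 1) else 0) +
    ∑ i ∈ β.support,
      match i with
      | Sum.inl _ => 0
      | Sum.inr p =>
          if hp : ((p.1.1 - 1, p.1.2) : ℕ × ℕ) ≠ (0, 0) ∧ 1 ≤ p.1.1 then
            (p.1.1 : ℝ) *
              ((((β - Finsupp.single (Sum.inr p) 1 : MIdx) (Sum.inr ⟨(p.1.1 - 1, p.1.2), hp.1⟩) : ℕ) + 1 : ℕ) : ℝ) *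
              MvPowerSeries.coeff
                (β - Finsupp.single (Sum.inr p) 1 +
                  Finsupp.single (Sum.inr ⟨(p.1.1 - 1, p.1.2), hp.1⟩) 1) f
          else 0

/-- `∂₁` on power series. -/
def d1series (f : PS) : PS := d1coeff f

/-- coefficient of `∂₂ f` at `β`. -/
def d2coeff (f : PS) (β : MIdx) : ℝ :=
  (if 1 ≤ β (Sum.inr v01) then D0coeff f (β - Finsupp.single (Sum.inr v01) 1) else 0) +
    ∑ i ∈ β.support,
      match i with
      | Sum.inl _ => 0
      | Sum.inr p =>
          if hp : ((p.1.1, p.1.2 - 1) : ℕ × ℕ) ≠ (0, 0) ∧ 1 ≤ p.1.2 then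
            (p.1.2 : ℝ) *
              ((((β - Finsupp.single (Sum.inr p) 1 : MIdx) (Sum.inr ⟨(p.1.1, p.1.2 - 1), hp.1⟩) : ℕ) + 1 : ℕ) : ℝ) *
              MvPowerSeries.coeff
                (β - Finsupp.single (Sum.inr p) 1 +
                  Finsupp.single (Sum.inr ⟨(p.1.1, p.1.2 - 1), hp.1⟩) 1) f
          else 0

/-- `∂₂` on power series. -/
def d2series (f : PS) : PS := d2coeff f

/-- the operator `z^γ·D^(𝐧)` on power series. -/
def opOf (γ : MIdx) (n : ℕ × ℕ) (f : PS) : PS :=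
  MvPowerSeries.monomial (R := ℝ) γ 1 * Dseries n f

/-- the dual model space `T̃*`. -/
def Ttilde : Set PS := {f | ∀ γ : MIdx, MvPowerSeries.coeff γ f ≠ 0 → 0 ≤ brk γ}

/-- the dual model space `T*`. -/
def Tstar : Set PS :=
  {f | ∀ γ : MIdx, MvPowerSeries.coeff γ f ≠ 0 →
      0 ≤ brk γ ∨ ∃ m : N2, γ = Finsupp.single (Sum.inr m) 1}

/-! ### topology and the realization property -/

instance : TopologicalSpace PS := inferInstanceAs (TopologicalSpace ((Idx →₀ ℕ) → ℝ))

/-- `Γ` realizes the family `(π^(𝐧))_{𝐧∈ℕ²}`. -/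
def Realizes (Γ : PS →ₐ[ℝ] PS) (π : ℕ × ℕ → PS) : Prop :=
  Continuous Γ ∧
    (∀ m : N2, Γ (MvPowerSeries.X (Sum.inr m)) = MvPowerSeries.X (Sum.inr m) + π m.1) ∧
    (∀ k : ℕ, HasSum
      (fun l : ℕ => ((k + l).choose k : ℝ) • (π (0, 0) ^ l * MvPowerSeries.X (Sum.inl (k + l))))
      (Γ (MvPowerSeries.X (Sum.inl k))))

end

/-!
Both gradings are additive in the multi-index. Every monomial of `D^(0) z^γ` has exponent
`γ - e_k + e_{k+1}` with `e_k ≤ γ`, which raises `[·]` by one and leaves the weights of the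
`z_𝐦` alone; the monomial of `∂_{z_𝐧} z^γ` has exponent `γ - e_𝐧` with `e_𝐧 ≤ γ`, which raises
`[·]` by one and removes `|𝐧|` from the weight. Multiplying by `z^{γ'}` then adds `γ'`.
-/

lemma brk_add (a b : MIdx) : brk (a + b) = brk a + brk b := by
  unfold brk
  rw [Finsupp.sum_add_index']
  · intro i; cases i <;> simp
  · intro i m n; cases i <;> push_cast <;> ring

lemma wsum_add (w₁ w₂ : ℝ) (a b : MIdx) :
    wsum w₁ w₂ (a + b) = wsum w₁ w₂ a + wsum w₁ w₂ b := by
  unfold wsum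
  rw [Finsupp.sum_add_index']
  · intro i; cases i <;> simp
  · intro i m n; cases i <;> push_cast <;> ring

lemma brk_tsub {a b : MIdx} (hba : b ≤ a) : brk (a - b) = brk a - brk b := by
  rw [eq_sub_iff_add_eq, ← brk_add, tsub_add_cancel_of_le hba]

lemma wsum_tsub (w₁ w₂ : ℝ) {a b : MIdx} (hba : b ≤ a) :
    wsum w₁ w₂ (a - b) = wsum w₁ w₂ a - wsum w₁ w₂ b := by
  rw [eq_sub_iff_add_eq, ← wsum_add, tsub_add_cancel_of_le hba]

@[simp]
lemma brk_single_inl (k n : ℕ) : brk (Finsupp.single (Sum.inl k : Idx) n) = (k : ℤ) * n := by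
  unfold brk
  rw [Finsupp.sum_single_index]; simp

@[simp]
lemma brk_single_inr (m : N2) (n : ℕ) :
    brk (Finsupp.single (Sum.inr m : Idx) n) = -(n : ℤ) := by
  unfold brk
  rw [Finsupp.sum_single_index]; simp

@[simp]
lemma wsum_single_inl (w₁ w₂ : ℝ) (k n : ℕ) :
    wsum w₁ w₂ (Finsupp.single (Sum.inl k : Idx) n) = 0 := by
  unfold wsum
  rw [Finsupp.sum_single_index]; simp

@[simp]
lemma wsum_single_inr (w₁ w₂ : ℝ) (m : N2) (n : ℕ) :
    wsum w₁ w₂ (Finsupp.single (Sum.inr m : Idx) n) = wt w₁ w₂ m.1 * n := by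
  unfold wsum
  rw [Finsupp.sum_single_index]; simp

lemma exists_eq_of_coeff_D0mono_ne_zero {γ δ : MIdx} (h : coeff δ (D0mono γ) ≠ 0) :
    ∃ k, Finsupp.single (Sum.inl k) 1 ≤ γ ∧
      δ = γ - Finsupp.single (Sum.inl k) 1 + Finsupp.single (Sum.inl (k + 1)) 1 := by
  classical
  rw [D0mono, Finsupp.sum, coeff_sum] at h
  obtain ⟨i, hi, hterm⟩ := Finset.exists_ne_zero_of_sum_ne_zero h
  cases i with
  | inr m => simp at hterm
  | inl k =>
    rw [coeff_smul, coeff_monomial] at hterm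
    refine ⟨k, ?_, ?_⟩
    · exact Finsupp.single_le_iff.2 (Nat.one_le_iff_ne_zero.2 (Finsupp.mem_support_iff.1 hi))
    · by_contra hδ
      exact hterm (by rw [if_neg (Ne.symm hδ), smul_zero])

lemma single_le_and_eq_of_coeff_DNmono_ne_zero {m : N2} {γ δ : MIdx} (h : coeff δ (DNmono m γ) ≠ 0) :
    Finsupp.single (Sum.inr m) 1 ≤ γ ∧ δ = γ - Finsupp.single (Sum.inr m) 1 := by
  classical
  rw [DNmono, coeff_smul, coeff_monomial] at h
  refine ⟨Finsupp.single_le_iff.2 (Nat.one_le_iff_ne_zero.2 fun h0 => h (by simp [h0])), ?_⟩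
  by_contra hδ
  exact h (by rw [if_neg (Ne.symm hδ), smul_zero])

lemma brk_wsum_of_coeff_Dmono_ne_zero (w₁ w₂ : ℝ) {n : ℕ × ℕ} {γ δ : MIdx}
    (h : coeff δ (Dmono n γ) ≠ 0) :
    brk δ = brk γ + 1 ∧ wsum w₁ w₂ δ = wsum w₁ w₂ γ - wt w₁ w₂ n := by
  by_cases hn : n = (0, 0)
  · rw [Dmono, dif_pos hn] at h
    obtain ⟨k, hk, rfl⟩ := exists_eq_of_coeff_D0mono_ne_zero h
    subst hn
    simp only [brk_add, brk_tsub hk, wsum_add, wsum_tsub w₁ w₂ hk, brk_single_inl,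
      wsum_single_inl, wt]
    constructor <;> push_cast <;> ring
  · rw [Dmono, dif_neg hn] at h
    obtain ⟨hm, rfl⟩ := single_le_and_eq_of_coeff_DNmono_ne_zero h
    simp only [brk_tsub hm, wsum_tsub w₁ w₂ hm, brk_single_inr, wsum_single_inr]
    constructor <;> push_cast <;> ring

theorem stmt6_general (w₁ w₂ : ℝ) (γ γ' β : MIdx) (n' : ℕ × ℕ)
    (h : MvPolynomial.coeff β (MvPolynomial.monomial γ' 1 * Dmono n' γ) ≠ 0) :
    brk β = brk γ + brk γ' + 1 ∧
      wsum w₁ w₂ β = wsum w₁ w₂ γ + wsum w₁ w₂ γ' - wt w₁ w₂ n' := by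
  rw [coeff_monomial_mul', one_mul] at h
  split_ifs at h with hγ'
  · obtain ⟨hbrk, hwsum⟩ := brk_wsum_of_coeff_Dmono_ne_zero w₁ w₂ h
    rw [brk_tsub hγ'] at hbrk
    rw [wsum_tsub w₁ w₂ hγ'] at hwsum
    constructor <;> linarith
  · exact absurd rfl h

/-- **Compatibility of the generators with the bigradation** (formula (fs04)). -/
theorem stmt6 (w₁ w₂ : ℝ) (hw₁ : 0 < w₁) (hw₂ : 0 < w₂) (γ γ' β : MIdx) (n' : ℕ × ℕ)
    (h : MvPolynomial.coeff β (MvPolynomial.monomial γ' 1 * Dmono n' γ) ≠ 0) :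
    brk β = brk γ + brk γ' + 1 ∧
      wsum w₁ w₂ β = wsum w₁ w₂ γ + wsum w₁ w₂ γ' - wt w₁ w₂ n' :=
  stmt6_general w₁ w₂ γ γ' β n' h
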